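/- Consider a dataset of two sequences y^(1), y^(2) over a finite vocabulary containing eos, with shared prefix y^(1)_{<t0} = y^(2)_{<t0}, with |y^(1)| = t0 (so y^(1)_{t0} = eos) and t0 < |y^(2)| - 1 (so y^(2)_{t0} ≠ eos and y^(2)_{t0+1} ≠ eos), under the same context. Any conditional model p that exactly maximizes the joint log-likelihood of both sequences (i.e., assigns probability matching the empirical conditional frequencies) satisfies: p(eos | y^(2)_{<t}) = 0 for t < t0, p(eos | y^(2)_{<t0}) = 1/2, and p(eos | y^(2)_{<t0+1}) = 0. In particular t ↦ p(eos | y^(2)_{<t}) is not monotone. -/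
import Mathlib


/-- Number of training sequences in `D` having `ρ` as a strict prefix. -/
def prefixCount {V : Type*} [DecidableEq V] (D : List (List V)) (ρ : List V) : ℕ :=
  D.countP (fun y => decide (ρ <+: y ∧ ρ ≠ y))

/-- Number of training sequences in `D` whose next token after the prefix `ρ` is `v`. -/
def nextCount {V : Type*} [DecidableEq V] (D : List (List V)) (ρ : List V) (v : V) : ℕ :=
  D.countP (fun y => decide ((ρ ++ [v]) <+: y))

lemma take_prefix_getElem {V : Type*} {l : List V} {s : ℕ} {v : V}
    (hs : s < l.length) (h : (l.take s ++ [v]) <+: l) : l[s]? = some v := by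
  have h1 : l.take s ++ [v] = l.take (s+1) := by
    have := List.prefix_iff_eq_take.mp h
    simpa [List.length_append, Nat.min_eq_left hs.le] using this
  rw [List.take_succ] at h1
  have := List.append_cancel_left h1.symm
  simp [List.getElem?_eq_getElem hs] at this ⊢
  exact this

lemma pc2 {V : Type*} [DecidableEq V] {y1 y2 ρ : List V}
    (h1 : ρ <+: y1 ∧ ρ ≠ y1) (h2 : ρ <+: y2 ∧ ρ ≠ y2) :
    prefixCount [y1, y2] ρ = 2 := by
  simp [prefixCount, List.countP_cons, h1, h2]

theorem optimal_eos_prob_nonmonotone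
    {V : Type*} [DecidableEq V] (eos : V)
    (y1 y2 : List V) (t0 : ℕ) (ht0 : 1 ≤ t0)
    (hpre : y1.take (t0 - 1) = y2.take (t0 - 1))
    (hlen1 : y1.length = t0)
    (hlen2 : t0 + 1 < y2.length)
    (hy1end : y1[t0 - 1]? = some eos)
    (hy1eos : ∀ i, i + 1 < y1.length → y1[i]? ≠ some eos)
    (hy2eos : ∀ i, i + 1 < y2.length → y2[i]? ≠ some eos)
    (p : List V → V → ℝ)
    (hmle : ∀ ρ : List V, ∀ v : V, prefixCount [y1, y2] ρ ≠ 0 →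
      p ρ v = (nextCount [y1, y2] ρ v : ℝ) / (prefixCount [y1, y2] ρ : ℝ)) :
    (∀ s, s + 1 < t0 → p (y2.take s) eos = 0) ∧
    p (y2.take (t0 - 1)) eos = 1 / 2 ∧
    p (y2.take t0) eos = 0 ∧
    ¬ Monotone (fun t => p (y2.take t) eos) := by
  have hl2 : t0 < y2.length := by omega
  -- y2.take s = y1.take s for s ≤ t0 - 1
  have htake : ∀ s, s ≤ t0 - 1 → y2.take s = y1.take s := by
    intro s hs
    rw [← Nat.min_eq_left hs, ← List.take_take, ← hpre, List.take_take, Nat.min_eq_left hs]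
  -- strict prefix facts
  have hsp2 : ∀ s, s < y2.length → y2.take s <+: y2 ∧ y2.take s ≠ y2 := by
    intro s hs
    refine ⟨List.take_prefix _ _, fun h => ?_⟩
    have := congrArg List.length h
    simp [Nat.min_eq_left hs.le] at this
    omega
  have hsp1 : ∀ s, s ≤ t0 - 1 → y2.take s <+: y1 ∧ y2.take s ≠ y1 := by
    intro s hs
    rw [htake s hs]
    refine ⟨List.take_prefix _ _, fun h => ?_⟩
    have := congrArg List.length h
    have hs' : s < y1.length := by omega
    simp [Nat.min_eq_left hs'.le] at this
    omega
  -- case 1 : s + 1 < t0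
  have case1 : ∀ s, s + 1 < t0 → p (y2.take s) eos = 0 := by
    intro s hs
    have hpc : prefixCount [y1, y2] (y2.take s) = 2 :=
      pc2 (hsp1 s (by omega)) (hsp2 s (by omega))
    have hnc : nextCount [y1, y2] (y2.take s) eos = 0 := by
      have h1 : ¬ ((y2.take s ++ [eos]) <+: y1) := by
        intro h
        rw [htake s (by omega)] at h
        exact hy1eos s (by omega) (take_prefix_getElem (by omega) h)
      have h2 : ¬ ((y2.take s ++ [eos]) <+: y2) := by
        intro h
        exact hy2eos s (by omega) (take_prefix_getElem (by omega) h)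
      simp [nextCount, List.countP_cons, h1, h2]
    rw [hmle _ _ (by omega), hnc, hpc]
    norm_num
  have case2 : p (y2.take (t0 - 1)) eos = 1 / 2 := by
    have hpc : prefixCount [y1, y2] (y2.take (t0-1)) = 2 :=
      pc2 (hsp1 _ le_rfl) (hsp2 _ (by omega))
    have hy1eq : y1 = y2.take (t0 - 1) ++ [eos] := by
      have : y1 = y1.take ((t0 - 1) + 1) := by
        rw [List.take_of_length_le (by omega)]
      rw [this, List.take_succ, hy1end, hpre]
      simp
    have hnc : nextCount [y1, y2] (y2.take (t0-1)) eos = 1 := by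
      have h1 : (y2.take (t0-1) ++ [eos]) <+: y1 := by rw [hy1eq]
      have h2 : ¬ ((y2.take (t0-1) ++ [eos]) <+: y2) := by
        intro h
        exact hy2eos (t0-1) (by omega) (take_prefix_getElem (by omega) h)
      simp [nextCount, List.countP_cons, h1, h2]
    rw [hmle _ _ (by omega), hnc, hpc]
    norm_num
  have case3 : p (y2.take t0) eos = 0 := by
    have h1 : ¬ (y2.take t0 <+: y1 ∧ y2.take t0 ≠ y1) := by
      rintro ⟨h, hne⟩
      exact hne (h.eq_of_length (by simp [Nat.min_eq_left hl2.le, hlen1]))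
    have hpc : prefixCount [y1, y2] (y2.take t0) = 1 := by
      simp [prefixCount, List.countP_cons, h1, hsp2 t0 (by omega)]
    have hnc : nextCount [y1, y2] (y2.take t0) eos = 0 := by
      have h1' : ¬ ((y2.take t0 ++ [eos]) <+: y1) := by
        intro h
        have := h.length_le
        simp [Nat.min_eq_left hl2.le, hlen1] at this
      have h2 : ¬ ((y2.take t0 ++ [eos]) <+: y2) := by
        intro h
        exact hy2eos t0 (by omega) (take_prefix_getElem (by omega) h)
      simp [nextCount, List.countP_cons, h1', h2]
    rw [hmle _ _ (by omega), hnc, hpc]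
    norm_num
  refine ⟨case1, case2, case3, fun hmono => ?_⟩
  have := hmono (show t0 - 1 ≤ t0 by omega)
  simp only [case2, case3] at this
  linarith
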